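/- Let A ∈ ℝ^{m×n} have full column rank with least-squares solution x ≠ 0 and residual r = b − Ax. For Δx ∈ ℝ^n, define v₁ = (AᵀA)^{-1}Δx, u₂ = −A(AᵀA)^{-1}Δx. Then when Δx is a unit right singular vector of A corresponding to σ_min(A), ‖r‖₂‖v₁‖₂ = ‖r‖₂/σ_min(A)² and ‖u₂‖₂‖x‖₂ = ‖x‖₂/σ_min(A), and these choices maximize ‖r‖₂‖v₁‖₂ and ‖u₂‖₂‖x‖₂ simultaneously over all unit vectors Δx. -/

import Mathlib

open Matrix BigOperators

/-- Euclidean 2-norm of a vector in `ℝ^n`. -/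
noncomputable def enorm2 {n : ℕ} (x : Fin n → ℝ) : ℝ := Real.sqrt (∑ i, x i ^ 2)

/-- Frobenius norm of a real matrix. -/
noncomputable def frobNorm {m n : ℕ} (M : Matrix (Fin m) (Fin n) ℝ) : ℝ :=
  Real.sqrt (∑ i, ∑ j, M i j ^ 2)

/-- The singular values of a real `m × n` matrix: square roots of the eigenvalues of `Aᵀ A`
(for real matrices `Aᴴ = Aᵀ`). -/
noncomputable def singVal {m n : ℕ} (A : Matrix (Fin m) (Fin n) ℝ) (i : Fin n) : ℝ :=
  Real.sqrt ((show (Aᵀ * A).IsHermitian by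
    simpa using Matrix.isHermitian_conjTranspose_mul_self A).eigenvalues i)

/-- Nuclear (trace) norm: the sum of the singular values with multiplicity. -/
noncomputable def nuclearNorm {m n : ℕ} (A : Matrix (Fin m) (Fin n) ℝ) : ℝ :=
  ∑ i, singVal A i

/-- Spectral norm (operator 2-norm): sup of `‖A x‖₂` over Euclidean unit vectors `x`. -/
noncomputable def specNorm {m n : ℕ} (A : Matrix (Fin m) (Fin n) ℝ) : ℝ :=
  sSup {c | ∃ x : Fin n → ℝ, enorm2 x = 1 ∧ c = enorm2 (A.mulVec x)}

/-- Smallest singular value of a real `m × n` matrix. -/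
noncomputable def sigmaMin {m n : ℕ} (A : Matrix (Fin m) (Fin n) ℝ) : ℝ :=
  Real.sqrt (⨅ i : Fin n, (show (Aᵀ * A).IsHermitian by
    simpa using Matrix.isHermitian_conjTranspose_mul_self A).eigenvalues i)

/-! Put `G = AᵀA`, invertible by full column rank, and `σ = σ_min(A)`, so that `σ²` is a lower
bound for the eigenvalues of `G`. For a unit vector `y` and `z = G⁻¹y` the Rayleigh bound gives
`σ²‖z‖² ≤ zᵀGz = zᵀy ≤ ‖z‖`, hence `‖G⁻¹y‖ ≤ σ⁻²`, and `‖AG⁻¹y‖² = zᵀGz ≤ σ⁻²`. When `y` is an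
eigenvector of `G` for `σ²`, `G⁻¹y = σ⁻²y` and both bounds become equalities. -/

lemma enorm2_eq_norm {n : ℕ} (v : Fin n → ℝ) : enorm2 v = ‖WithLp.toLp 2 v‖ := by
  simp [enorm2, EuclideanSpace.norm_eq]

lemma enorm2_nonneg {n : ℕ} (v : Fin n → ℝ) : 0 ≤ enorm2 v := Real.sqrt_nonneg _

lemma sq_enorm2 {n : ℕ} (v : Fin n → ℝ) : enorm2 v ^ 2 = v ⬝ᵥ v := by
  rw [enorm2, Real.sq_sqrt (Finset.sum_nonneg fun i _ => sq_nonneg (v i))]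
  simp [dotProduct, sq]

lemma enorm2_smul {n : ℕ} (c : ℝ) (v : Fin n → ℝ) : enorm2 (c • v) = |c| * enorm2 v := by
  simp only [enorm2_eq_norm, WithLp.toLp_smul, norm_smul, Real.norm_eq_abs]

lemma dotProduct_le_enorm2_mul_enorm2 {n : ℕ} (u v : Fin n → ℝ) :
    u ⬝ᵥ v ≤ enorm2 u * enorm2 v := by
  simpa [enorm2_eq_norm, EuclideanSpace.inner_eq_star_dotProduct, dotProduct_comm] using
    real_inner_le_norm (WithLp.toLp 2 u) (WithLp.toLp 2 v)

lemma ne_zero_of_enorm2_eq_one {n : ℕ} {v : Fin n → ℝ} (hv : enorm2 v = 1) : v ≠ 0 := by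
  rintro rfl
  simp [enorm2] at hv

namespace Matrix

lemma isUnit_of_rank_eq_card {ι K : Type*} [Fintype ι] [DecidableEq ι] [Field K]
    {M : Matrix ι ι K} (h : M.rank = Fintype.card ι) : IsUnit M := by
  refine mulVec_surjective_iff_isUnit.mp (LinearMap.range_eq_top (f := M.mulVecLin).mp ?_)
  exact Submodule.eq_top_of_finrank_eq (h.trans (Module.finrank_fintype_fun_eq_card K).symm)

lemma ne_zero_of_mulVec_eq_smul {ι K : Type*} [Fintype ι] [DecidableEq ι] [Field K]
    {M : Matrix ι ι K} (hM : IsUnit M) {μ : K} {v : ι → K} (hv : v ≠ 0)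
    (h : M *ᵥ v = μ • v) : μ ≠ 0 := by
  rintro rfl
  exact hv ((mulVec_injective_iff_isUnit.mpr hM) (by rw [h, zero_smul, mulVec_zero]))

lemma inv_mulVec_eq_inv_smul {ι K : Type*} [Fintype ι] [DecidableEq ι] [Field K]
    {M : Matrix ι ι K} (hM : IsUnit M) {μ : K} (hμ : μ ≠ 0) {v : ι → K}
    (h : M *ᵥ v = μ • v) : M⁻¹ *ᵥ v = μ⁻¹ • v := by
  have hdet := (isUnit_iff_isUnit_det M).mp hM
  rw [← inv_smul_smul₀ hμ (M⁻¹ *ᵥ v), ← mulVec_smul, ← h, mulVec_mulVec,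
    nonsing_inv_mul _ hdet, one_mulVec]

lemma IsHermitian.mul_dotProduct_self_le {ι : Type*} [Fintype ι] [DecidableEq ι]
    {M : Matrix ι ι ℝ} (hM : M.IsHermitian) {μ : ℝ} (h : ∀ i, μ ≤ hM.eigenvalues i)
    (v : ι → ℝ) : μ * (v ⬝ᵥ v) ≤ v ⬝ᵥ M *ᵥ v := by
  open scoped MatrixOrder in
  have hle : algebraMap ℝ (Matrix ι ι ℝ) μ ≤ M := by
    rw [algebraMap_le_iff_le_spectrum (a := M) hM.isSelfAdjoint,
      hM.spectrum_real_eq_range_eigenvalues]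
    rintro _ ⟨i, rfl⟩
    exact h i
  simpa [sub_mulVec, dotProduct_sub, Algebra.algebraMap_eq_smul_one, smul_mulVec, sub_nonneg] using
    (le_iff.mp hle).dotProduct_mulVec_nonneg v

lemma isHermitian_transpose_mul_self {m n R : Type*} [Fintype m] [CommSemiring R] [StarRing R]
    [TrivialStar R] (A : Matrix m n R) :
    (Aᵀ * A).IsHermitian := by
  simpa using isHermitian_conjTranspose_mul_self A

end Matrix

lemma sq_enorm2_mulVec {m n : ℕ} (A : Matrix (Fin m) (Fin n) ℝ) (u : Fin n → ℝ) :
    enorm2 (A *ᵥ u) ^ 2 = u ⬝ᵥ (Aᵀ * A) *ᵥ u := by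
  rw [sq_enorm2, ← mulVec_mulVec, dotProduct_mulVec u Aᵀ, vecMul_transpose]

lemma sq_sigmaMin_le_eigenvalues {m n : ℕ} (A : Matrix (Fin m) (Fin n) ℝ) (i : Fin n) :
    sigmaMin A ^ 2 ≤ (isHermitian_transpose_mul_self A).eigenvalues i := by
  have hnonneg : ∀ j, 0 ≤ (isHermitian_transpose_mul_self A).eigenvalues j := fun j => by
    simpa using eigenvalues_conjTranspose_mul_self_nonneg A j
  rw [sigmaMin, Real.sq_sqrt (Real.iInf_nonneg hnonneg)]
  exact ciInf_le (Finite.bddBelow_range _) i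

section InverseBounds

variable {n : ℕ} {M : Matrix (Fin n) (Fin n) ℝ} (hM : M.IsHermitian) (hMu : IsUnit M) {μ : ℝ}
  (hμ : 0 < μ) (h : ∀ i, μ ≤ hM.eigenvalues i)
include hM hMu hμ h

lemma enorm2_inv_mulVec_le (y : Fin n → ℝ) : enorm2 (M⁻¹ *ᵥ y) ≤ μ⁻¹ * enorm2 y := by
  set z := M⁻¹ *ᵥ y
  have hz : M *ᵥ z = y := by
    rw [mulVec_mulVec, mul_nonsing_inv _ ((isUnit_iff_isUnit_det M).mp hMu), one_mulVec]
  have key : μ * enorm2 z * enorm2 z ≤ enorm2 y * enorm2 z :=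
    calc μ * enorm2 z * enorm2 z = μ * (z ⬝ᵥ z) := by rw [mul_assoc, ← sq, sq_enorm2]
      _ ≤ z ⬝ᵥ M *ᵥ z := hM.mul_dotProduct_self_le h z
      _ = z ⬝ᵥ y := by rw [hz]
      _ ≤ enorm2 y * enorm2 z := by rw [mul_comm]; exact dotProduct_le_enorm2_mul_enorm2 z y
  rw [le_inv_mul_iff₀ hμ]
  rcases (enorm2_nonneg z).eq_or_lt with hz0 | hz0
  · rw [← hz0, mul_zero]; exact enorm2_nonneg y
  · exact le_of_mul_le_mul_right key hz0

lemma inv_mulVec_dotProduct_le (y : Fin n → ℝ) : (M⁻¹ *ᵥ y) ⬝ᵥ y ≤ μ⁻¹ * enorm2 y ^ 2 :=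
  calc (M⁻¹ *ᵥ y) ⬝ᵥ y ≤ enorm2 (M⁻¹ *ᵥ y) * enorm2 y := dotProduct_le_enorm2_mul_enorm2 _ _
    _ ≤ μ⁻¹ * enorm2 y * enorm2 y := by
      gcongr
      · exact enorm2_nonneg _
      · exact enorm2_inv_mulVec_le hM hMu hμ h y
    _ = μ⁻¹ * enorm2 y ^ 2 := by ring

end InverseBounds

lemma sq_enorm2_mulVec_inv_mulVec {m n : ℕ} (A : Matrix (Fin m) (Fin n) ℝ) (hA : IsUnit (Aᵀ * A))
    (y : Fin n → ℝ) : enorm2 (A *ᵥ ((Aᵀ * A)⁻¹ *ᵥ y)) ^ 2 = ((Aᵀ * A)⁻¹ *ᵥ y) ⬝ᵥ y := by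
  rw [sq_enorm2_mulVec, mulVec_mulVec,
    mul_nonsing_inv _ ((isUnit_iff_isUnit_det _).mp hA), one_mulVec]

lemma enorm2_mulVec_inv_mulVec_le {m n : ℕ} (A : Matrix (Fin m) (Fin n) ℝ)
    (hA : IsUnit (Aᵀ * A)) {σ : ℝ} (hσ : 0 < σ)
    (h : ∀ i, σ ^ 2 ≤ (isHermitian_transpose_mul_self A).eigenvalues i) (y : Fin n → ℝ) :
    enorm2 (A *ᵥ ((Aᵀ * A)⁻¹ *ᵥ y)) ≤ σ⁻¹ * enorm2 y := by
  refine (pow_le_pow_iff_left₀ (enorm2_nonneg _)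
    (mul_nonneg (inv_nonneg.mpr hσ.le) (enorm2_nonneg y)) two_ne_zero).mp ?_
  rw [sq_enorm2_mulVec_inv_mulVec A hA, mul_pow, inv_pow]
  exact inv_mulVec_dotProduct_le _ hA (by positivity) h y

theorem maximizing_right_singular_vector_general {m n : ℕ} (A : Matrix (Fin m) (Fin n) ℝ)
    (hrank : A.rank = n)
    (x : Fin n → ℝ)
    (r : Fin m → ℝ)
    (Δx : Fin n → ℝ) (hΔ : enorm2 Δx = 1)
    (hsing : (Aᵀ * A).mulVec Δx = (sigmaMin A ^ 2) • Δx) :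
    enorm2 r * enorm2 ((Aᵀ * A)⁻¹.mulVec Δx) = enorm2 r / sigmaMin A ^ 2 ∧
    enorm2 (A.mulVec ((Aᵀ * A)⁻¹.mulVec Δx)) * enorm2 x = enorm2 x / sigmaMin A ∧
    ∀ Δy : Fin n → ℝ, enorm2 Δy = 1 →
      enorm2 r * enorm2 ((Aᵀ * A)⁻¹.mulVec Δy)
          ≤ enorm2 r * enorm2 ((Aᵀ * A)⁻¹.mulVec Δx) ∧
      enorm2 (A.mulVec ((Aᵀ * A)⁻¹.mulVec Δy)) * enorm2 x
          ≤ enorm2 (A.mulVec ((Aᵀ * A)⁻¹.mulVec Δx)) * enorm2 x := by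
  set σ := sigmaMin A
  have hG : IsUnit (Aᵀ * A) :=
    isUnit_of_rank_eq_card (by rw [rank_transpose_mul_self, hrank, Fintype.card_fin])
  have hσ2 : σ ^ 2 ≠ 0 := ne_zero_of_mulVec_eq_smul hG (ne_zero_of_enorm2_eq_one hΔ) hsing
  have hσ : 0 < σ := (Real.sqrt_nonneg _).lt_of_ne' (pow_ne_zero_iff two_ne_zero |>.mp hσ2)
  have hGΔ := inv_mulVec_eq_inv_smul hG hσ2 hsing
  have hv₁ : enorm2 ((Aᵀ * A)⁻¹ *ᵥ Δx) = (σ ^ 2)⁻¹ := by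
    rw [hGΔ, enorm2_smul, hΔ, mul_one, abs_of_pos (by positivity)]
  have hu₂ : enorm2 (A *ᵥ ((Aᵀ * A)⁻¹ *ᵥ Δx)) = σ⁻¹ := by
    rw [← pow_left_inj₀ (enorm2_nonneg _) (inv_nonneg.mpr hσ.le) two_ne_zero,
      sq_enorm2_mulVec_inv_mulVec A hG, hGΔ, smul_dotProduct, ← sq_enorm2, hΔ, smul_eq_mul,
      one_pow, mul_one, inv_pow]
  refine ⟨by rw [hv₁, div_eq_mul_inv], by rw [hu₂, div_eq_mul_inv, mul_comm],
    fun Δy hΔy => ⟨?_, ?_⟩⟩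
  · rw [hv₁]
    gcongr
    · exact enorm2_nonneg _
    · simpa [hΔy] using
        enorm2_inv_mulVec_le _ hG (by positivity) (sq_sigmaMin_le_eigenvalues A) Δy
  · rw [hu₂]
    gcongr
    · exact enorm2_nonneg _
    · simpa [hΔy] using enorm2_mulVec_inv_mulVec_le A hG hσ (sq_sigmaMin_le_eigenvalues A) Δy

/-- When `Δx` is a unit right singular vector of `A` for `σ_min(A)` (a unit eigenvector
of `AᵀA` with eigenvalue `σ_min(A)²`), the quantities `‖r‖₂‖(AᵀA)⁻¹Δx‖₂` and
`‖A(AᵀA)⁻¹Δx‖₂‖x‖₂` attain the values `‖r‖₂/σ_min²` and `‖x‖₂/σ_min`, and these choices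
simultaneously maximize both quantities over all unit vectors. -/
theorem maximizing_right_singular_vector {m n : ℕ} (A : Matrix (Fin m) (Fin n) ℝ)
    (hrank : A.rank = n) (b : Fin m → ℝ)
    (x : Fin n → ℝ) (hx : x = ((Aᵀ * A)⁻¹ * Aᵀ).mulVec b) (hx0 : x ≠ 0)
    (r : Fin m → ℝ) (hr : r = b - A.mulVec x)
    (Δx : Fin n → ℝ) (hΔ : enorm2 Δx = 1)
    (hsing : (Aᵀ * A).mulVec Δx = (sigmaMin A ^ 2) • Δx) :
    enorm2 r * enorm2 ((Aᵀ * A)⁻¹.mulVec Δx) = enorm2 r / sigmaMin A ^ 2 ∧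
    enorm2 (A.mulVec ((Aᵀ * A)⁻¹.mulVec Δx)) * enorm2 x = enorm2 x / sigmaMin A ∧
    ∀ Δy : Fin n → ℝ, enorm2 Δy = 1 →
      enorm2 r * enorm2 ((Aᵀ * A)⁻¹.mulVec Δy)
          ≤ enorm2 r * enorm2 ((Aᵀ * A)⁻¹.mulVec Δx) ∧
      enorm2 (A.mulVec ((Aᵀ * A)⁻¹.mulVec Δy)) * enorm2 x
          ≤ enorm2 (A.mulVec ((Aᵀ * A)⁻¹.mulVec Δx)) * enorm2 x :=
  maximizing_right_singular_vector_general A hrank x r Δx hΔ hsing
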